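/- For any σ_f > 0, ℓ > 0, any n ∈ ℕ, and any pairwise distinct points x₁, …, xₙ ∈ ℝ, the Gram matrix K(X,X) ∈ ℝ^{n×n} with entries K_{ij} = σ_f² · exp(−(x_i − x_j)²/(2ℓ²)) is positive definite, i.e., vᵀ K v > 0 for every nonzero v ∈ ℝⁿ; in particular K(X,X) is invertible. -/

import Mathlib

/-!
Completing the square, `k(x, x') = φ(x) · exp(x x' / ℓ²) · φ(x')` with `φ(x) = σf · exp(−x²/(2ℓ²))`
nonvanishing, so the Gram matrix is a diagonal congruence of `M = (exp(a xᵢ xⱼ))` with `a = 1/ℓ²`.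
Expanding the exponential, `wᵀ M w = ∑ₖ aᵏ/k! · (∑ᵢ wᵢ xᵢᵏ)²`, and for `w ≠ 0` some term with
`k < n` is nonzero because the Vandermonde matrix of distinct points is invertible.
-/

open Matrix

/-- The squared-exponential kernel `k(x,x') = σf² · exp(−(x−x')²/(2ℓ²))`. -/
noncomputable def sqExpKernel (σf ℓ x x' : ℝ) : ℝ :=
  σf ^ 2 * Real.exp (-(x - x') ^ 2 / (2 * ℓ ^ 2))

open Finset in
theorem hasSum_dotProduct_exp_mul_mulVec {ι : Type*} [Fintype ι] (a : ℝ) (x w : ι → ℝ) :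
    HasSum (fun k => a ^ k / k.factorial * (∑ i, w i * x i ^ k) ^ 2)
      (w ⬝ᵥ (of fun i j => Real.exp (a * x i * x j)) *ᵥ w) := by
  have hexp (i j : ι) : HasSum (fun k => (a * x i * x j) ^ k / k.factorial)
      (Real.exp (a * x i * x j)) := by
    rw [Real.exp_eq_exp_ℝ]
    exact NormedSpace.expSeries_div_hasSum_exp _
  have hsum := hasSum_sum fun i (_ : i ∈ univ) =>
    (hasSum_sum fun j (_ : j ∈ univ) => (hexp i j).mul_right (w j)).mul_left (w i)
  have hterm (k : ℕ) : a ^ k / k.factorial * (∑ i, w i * x i ^ k) ^ 2 =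
      ∑ i, w i * ∑ j, (a * x i * x j) ^ k / k.factorial * w j := by
    rw [sq, sum_mul_sum, mul_sum]
    refine sum_congr rfl fun i _ => ?_
    rw [mul_sum, mul_sum]
    refine sum_congr rfl fun j _ => ?_
    ring
  simpa only [hterm, dotProduct, mulVec, of_apply] using hsum

theorem posDef_exp_mul_mul {n : ℕ} {a : ℝ} (ha : 0 < a) {x : Fin n → ℝ}
    (hx : Function.Injective x) : (of fun i j => Real.exp (a * x i * x j)).PosDef := by
  refine .of_dotProduct_mulVec_pos ?_ fun w hw => ?_
  · ext i j
    simp only [conjTranspose_apply, of_apply, star_trivial]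
    rw [mul_right_comm]
  obtain ⟨k, hk⟩ : ∃ k : Fin n, ∑ i, w i * x i ^ (k : ℕ) ≠ 0 := by
    by_contra! h
    exact hw (eq_zero_of_forall_pow_sum_mul_pow_eq_zero hx h)
  rw [star_trivial]
  exact hasSum_lt (f := fun _ => 0) (i := (k : ℕ)) (fun _ => by positivity) (by positivity)
    hasSum_zero (hasSum_dotProduct_exp_mul_mulVec a x w)

theorem Matrix.PosDef.diagonal_mul_mul_diagonal {ι K : Type*} [Fintype ι] [DecidableEq ι]
    [Field K] [PartialOrder K] [StarRing K] [TrivialStar K] {A : Matrix ι ι K} (hA : A.PosDef)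
    {d : ι → K} (hd : ∀ i, d i ≠ 0) : (diagonal d * A * diagonal d).PosDef := by
  have hD : IsUnit (diagonal d) :=
    isUnit_diagonal.mpr (Pi.isUnit_iff.mpr fun i => (hd i).isUnit)
  have := (IsUnit.posDef_star_left_conjugate_iff hD).mpr hA
  rwa [star_eq_conjTranspose, diagonal_conjTranspose, star_trivial] at this

theorem sqExpKernel_eq_mul_exp_mul_mul (σf : ℝ) {ℓ : ℝ} (hℓ : ℓ ≠ 0) (x x' : ℝ) :
    sqExpKernel σf ℓ x x' = (σf * Real.exp (-x ^ 2 / (2 * ℓ ^ 2))) *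
      Real.exp ((ℓ ^ 2)⁻¹ * x * x') * (σf * Real.exp (-x' ^ 2 / (2 * ℓ ^ 2))) := by
  have hexp : -(x - x') ^ 2 / (2 * ℓ ^ 2) =
      -x ^ 2 / (2 * ℓ ^ 2) + (ℓ ^ 2)⁻¹ * x * x' + -x' ^ 2 / (2 * ℓ ^ 2) := by
    field_simp
    ring
  rw [sqExpKernel, hexp, Real.exp_add, Real.exp_add]
  ring

/-- For any `σf > 0`, `ℓ > 0` and pairwise distinct points `x₁, …, xₙ ∈ ℝ`, the Gram
matrix with entries `K_{ij} = σf² · exp(−(x_i − x_j)²/(2ℓ²))` is positive definite,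
i.e. `vᵀ K v > 0` for every nonzero `v`; in particular it is invertible. -/
theorem sqExp_gram_posDef (σf ℓ : ℝ) (hσf : 0 < σf) (hℓ : 0 < ℓ)
    (n : ℕ) (x : Fin n → ℝ) (hx : Function.Injective x) :
    (Matrix.of fun i j : Fin n => sqExpKernel σf ℓ (x i) (x j)).PosDef ∧
    (∀ v : Fin n → ℝ, v ≠ 0 →
      0 < v ⬝ᵥ (Matrix.of fun i j : Fin n => sqExpKernel σf ℓ (x i) (x j)).mulVec v) ∧
    IsUnit (Matrix.of fun i j : Fin n => sqExpKernel σf ℓ (x i) (x j)).det := by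
  set d : Fin n → ℝ := fun i => σf * Real.exp (-x i ^ 2 / (2 * ℓ ^ 2))
  have hK : (of fun i j => sqExpKernel σf ℓ (x i) (x j)) =
      diagonal d * (of fun i j => Real.exp ((ℓ ^ 2)⁻¹ * x i * x j)) * diagonal d := by
    ext i j
    simp only [sqExpKernel_eq_mul_exp_mul_mul σf hℓ.ne', of_apply, mul_diagonal, diagonal_mul, d]
  have hpos : (of fun i j => sqExpKernel σf ℓ (x i) (x j)).PosDef := by
    rw [hK]
    exact (posDef_exp_mul_mul (by positivity) hx).diagonal_mul_mul_diagonal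
      fun i => by positivity
  refine ⟨hpos, fun v hv => ?_, hpos.det_pos.ne'.isUnit⟩
  simpa only [star_trivial] using hpos.dotProduct_mulVec_pos hv
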